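/- Let F be a field of characteristic zero, V a finite-dimensional F-vector space, and S, T commuting nilpotent linear operators on V. Then the F[x,y]-module V_{S,T} (where x acts as S and y acts as T) is isomorphic to an F[x,y]-submodule of W_{xy,z}, the module F[x,y,z] on which x acts as ∂/∂x and y acts as ∂/∂y. -/

import Mathlib

/-!
The embedding is the truncated exponential `v ↦ exp (x S + y T) v
= ∑ xⁱ yʲ / (i! j!) · ι (Sⁱ Tʲ v)`, where `ι` is any linear embedding of `V` into `F[z]`. Since
`∂/∂x (xⁱ⁺¹/(i+1)!) = xⁱ/i!`, differentiating in `x` (resp. `y`) shifts the series by `S`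
(resp. `T`), the truncation being harmless because `S` and `T` are nilpotent. Setting
`x = y = 0` recovers `ι v`, so the map is injective.
-/

open MvPolynomial

section ExpPoly

variable {F V σ : Type*} [Field F] [AddCommGroup V] [Module F V]

noncomputable def expPoly (s : σ) (N : ℕ) (S : V →ₗ[F] V) (f : V →ₗ[F] MvPolynomial σ F) :
    V →ₗ[F] MvPolynomial σ F :=
  ∑ i ∈ Finset.range N, ((i.factorial : F)⁻¹ • X s ^ i : MvPolynomial σ F) • (f ∘ₗ S ^ i)

theorem expPoly_apply (s : σ) (N : ℕ) (S : V →ₗ[F] V) (f : V →ₗ[F] MvPolynomial σ F) (v : V) :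
    expPoly s N S f v =
      ∑ i ∈ Finset.range N, (i.factorial : F)⁻¹ • (X s ^ i * f ((S ^ i) v)) := by
  simp [expPoly]

theorem pderiv_factorial_inv_smul_X_pow_succ_mul [CharZero F] {s : σ} {g : MvPolynomial σ F}
    (hg : pderiv s g = 0) (i : ℕ) :
    pderiv s (((i + 1).factorial : F)⁻¹ • (X s ^ (i + 1) * g)) =
      (i.factorial : F)⁻¹ • (X s ^ i * g) := by
  have hfac : ((i + 1).factorial : F)⁻¹ * (i + 1) = (i.factorial : F)⁻¹ := by
    rw [Nat.factorial_succ, Nat.cast_mul, mul_inv, mul_comm, ← mul_assoc, Nat.cast_add_one,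
      mul_inv_cancel₀ (Nat.cast_add_one_ne_zero i), one_mul]
  rw [Derivation.map_smul, Derivation.leibniz, hg, Derivation.leibniz_pow, pderiv_X_self,
    ← hfac, mul_smul]
  congr 1
  rw [smul_eq_C_mul]
  simp
  ring

theorem pderiv_expPoly_self [CharZero F] {s : σ} {N : ℕ} {S : V →ₗ[F] V} (hS : S ^ N = 0)
    {f : V →ₗ[F] MvPolynomial σ F} (hf : ∀ v, pderiv s (f v) = 0) (v : V) :
    pderiv s (expPoly s N S f v) = expPoly s N S f (S v) := by
  cases N with
  | zero => simp [expPoly]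
  | succ M =>
    have hshift (i : ℕ) : (S ^ (i + 1)) v = (S ^ i) (S v) := by
      rw [pow_succ, Module.End.mul_apply]
    have hlast : (S ^ M) (S v) = 0 := by rw [← hshift, hS, LinearMap.zero_apply]
    rw [expPoly_apply, expPoly_apply, map_sum, Finset.sum_range_succ',
      Finset.sum_range_succ, hlast]
    simp only [hshift, pderiv_factorial_inv_smul_X_pow_succ_mul (hf _), pow_zero, one_mul,
      Derivation.map_smul, hf, smul_zero, add_zero, map_zero, mul_zero]

theorem pderiv_expPoly_of_ne {s u : σ} (hsu : s ≠ u) (N : ℕ) {S T : V →ₗ[F] V}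
    (hST : Commute S T) {f : V →ₗ[F] MvPolynomial σ F} (hf : ∀ v, pderiv u (f v) = f (T v))
    (v : V) : pderiv u (expPoly s N S f v) = expPoly s N S f (T v) := by
  rw [expPoly_apply, expPoly_apply, map_sum]
  refine Finset.sum_congr rfl fun i _ => ?_
  rw [← Module.End.mul_apply, (hST.pow_left i).eq, Module.End.mul_apply, ← hf]
  simp [Derivation.leibniz, pderiv_X_of_ne hsu]

theorem pderiv_expPoly_eq_zero_of_ne {s u : σ} (hsu : s ≠ u) (N : ℕ) (S : V →ₗ[F] V)
    {f : V →ₗ[F] MvPolynomial σ F} (hf : ∀ v, pderiv u (f v) = 0) (v : V) :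
    pderiv u (expPoly s N S f v) = 0 := by
  simpa using pderiv_expPoly_of_ne hsu N (Commute.zero_right S) (by simpa using hf) v

theorem map_expPoly_succ_of_map_X_eq_zero {A : Type*} [CommSemiring A] [Algebra F A]
    (φ : MvPolynomial σ F →ₐ[F] A) {s : σ} (hφ : φ (X s) = 0) (N : ℕ) (S : V →ₗ[F] V)
    (f : V →ₗ[F] MvPolynomial σ F) (v : V) :
    φ (expPoly s (N + 1) S f v) = φ (f v) := by
  rw [expPoly_apply, map_sum, Finset.sum_range_succ']
  simp [hφ]

theorem pderiv_aeval_X_of_ne {s u : σ} (hsu : s ≠ u) (p : Polynomial F) :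
    pderiv u (Polynomial.aeval (X s : MvPolynomial σ F) p) = 0 := by
  simp [pderiv_X_of_ne hsu]

end ExpPoly

theorem exists_injective_linearMap_polynomial (F V : Type*) [Field F] [AddCommGroup V]
    [Module F V] [FiniteDimensional F V] : ∃ j : V →ₗ[F] Polynomial F, Function.Injective j :=
  let n := Module.finrank F V
  ⟨(Polynomial.degreeLT F n).subtype ∘ₗ (Polynomial.degreeLTEquiv F n).symm.toLinearMap ∘ₗ
      (Module.finBasis F V).equivFun.toLinearMap,
    Subtype.val_injective.comp <|
      (Polynomial.degreeLTEquiv F n).symm.injective.comp (Module.finBasis F V).equivFun.injective⟩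

theorem stmt_4 (F V : Type*) [Field F] [CharZero F]
    [AddCommGroup V] [Module F V] [FiniteDimensional F V]
    (S T : V →ₗ[F] V) (hcomm : Commute S T)
    (hS : IsNilpotent S) (hT : IsNilpotent T) :
    ∃ W : Submodule F (MvPolynomial (Fin 3) F),
      (∀ p ∈ W, pderiv (0 : Fin 3) p ∈ W ∧ pderiv (1 : Fin 3) p ∈ W) ∧
      ∃ e : V →ₗ[F] MvPolynomial (Fin 3) F,
        Function.Injective e ∧ LinearMap.range e = W ∧
        ∀ v : V, e (S v) = pderiv (0 : Fin 3) (e v) ∧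
                 e (T v) = pderiv (1 : Fin 3) (e v) := by
  obtain ⟨n, hn⟩ := hS
  obtain ⟨m, hm⟩ := hT
  have hSN : S ^ (n + m + 1) = 0 := pow_eq_zero_of_le (by omega) hn
  have hTN : T ^ (n + m + 1) = 0 := pow_eq_zero_of_le (by omega) hm
  obtain ⟨j, hj⟩ := exists_injective_linearMap_polynomial F V
  let ι := (Polynomial.aeval (X 2 : MvPolynomial (Fin 3) F)).toLinearMap ∘ₗ j
  let e := expPoly 0 (n + m + 1) S (expPoly 1 (n + m + 1) T ι)
  have hι (k : Fin 3) (hk : 2 ≠ k) (v : V) : pderiv k (ι v) = 0 := pderiv_aeval_X_of_ne hk _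
  have he0 (v : V) : pderiv 0 (e v) = e (S v) :=
    pderiv_expPoly_self hSN (pderiv_expPoly_eq_zero_of_ne (s := 1) (u := 0) (by decide) _ T
      (hι 0 (by decide))) v
  have he1 (v : V) : pderiv 1 (e v) = e (T v) :=
    pderiv_expPoly_of_ne (s := 0) (u := 1) (by decide) _ hcomm
      (pderiv_expPoly_self hTN (hι 1 (by decide))) v
  have heval (v : V) : aeval ![0, 0, Polynomial.X] (e v) = j v := by
    rw [map_expPoly_succ_of_map_X_eq_zero _ (by simp),
      map_expPoly_succ_of_map_X_eq_zero _ (by simp)]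
    simp [ι, ← Polynomial.aeval_algHom_apply]
  have hinj : Function.Injective e :=
    .of_comp (f := aeval ![0, 0, Polynomial.X]) (by convert hj using 1; exact funext heval)
  refine ⟨LinearMap.range e, ?_, e, hinj, rfl, fun v => ⟨(he0 v).symm, (he1 v).symm⟩⟩
  rintro _ ⟨v, rfl⟩
  exact ⟨⟨S v, (he0 v).symm⟩, ⟨T v, (he1 v).symm⟩⟩
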